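/- Let p ≥ 1, let Ω ⊆ ℝ^d be a bounded open set, and let (Ω_k)_k be a countable family of pairwise disjoint open subsets of Ω. Then for all finite positive Borel measures μ, ν on the closure of Ω: Wb_{Ω,p}^p(μ, ν) ≥ Σ_k Wb_{Ω_k,p}^p(μ, ν). -/

import Mathlib

open MeasureTheory ProbabilityTheory Filter
open scoped ENNReal NNReal

noncomputable section

/-- The Wasserstein cost of order `p` (i.e. the `p`-th power of the `p`-Wasserstein
distance): the infimum over couplings `π` of `μ` and `ν` of `∫ edist(x,y)^p dπ`. -/
def wCost {E : Type*} [MeasurableSpace E] [PseudoEMetricSpace E]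
    (p : ℝ) (μ ν : Measure E) : ℝ≥0∞ :=
  ⨅ π ∈ {π : Measure (E × E) | π.map Prod.fst = μ ∧ π.map Prod.snd = ν},
    ∫⁻ z, edist z.1 z.2 ^ p ∂π

/-- The boundary Wasserstein cost of order `p` on a set `A`: the infimum of
`∫ edist(x,y)^p dπ` over positive measures `π` concentrated on `cl A × cl A`
whose marginals restricted to `A` coincide with `μ` and `ν` restricted to `A`. -/
def bCost {E : Type*} [MeasurableSpace E] [PseudoEMetricSpace E]
    (p : ℝ) (A : Set E) (μ ν : Measure E) : ℝ≥0∞ :=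
  ⨅ π ∈ {π : Measure (E × E) |
      π ((closure A ×ˢ closure A)ᶜ) = 0 ∧
      (π.map Prod.fst).restrict A = μ.restrict A ∧
      (π.map Prod.snd).restrict A = ν.restrict A},
    ∫⁻ z, edist z.1 z.2 ^ p ∂π

/-- The empirical measure `(1/n) ∑_{i<n} δ_{x i}`. -/
def empMeasure {E : Type*} [MeasurableSpace E] (n : ℕ) (x : ℕ → E) : Measure E :=
  (n : ℝ≥0∞)⁻¹ • ∑ i ∈ Finset.range n, Measure.dirac (x i)

/-- A set `Ω ⊆ ℝ^d` has Lipschitz boundary: near every boundary point, for a suitable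
unit direction `e`, `Ω` coincides with the open region strictly above the graph of a
Lipschitz function defined on the hyperplane `e^⊥`. -/
def HasLipschitzBoundary {d : ℕ} (Ω : Set (EuclideanSpace ℝ (Fin d))) : Prop :=
  ∀ x ∈ frontier Ω, ∃ e : EuclideanSpace ℝ (Fin d), ‖e‖ = 1 ∧
    ∃ r : ℝ, 0 < r ∧ ∃ L : ℝ≥0, ∃ φ : EuclideanSpace ℝ (Fin d) → ℝ,
      LipschitzWith L φ ∧
      Ω ∩ Metric.ball x r =
        {y ∈ Metric.ball x r | φ (y - (inner ℝ y e : ℝ) • e) < (inner ℝ y e : ℝ)}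

/-- `X` is an i.i.d. sequence of random variables with common law `μ` under `P`. -/
def IsIIDSeq {Ωs E : Type*} [MeasurableSpace Ωs] [MeasurableSpace E]
    (P : Measure Ωs) (X : ℕ → Ωs → E) (μ : Measure E) : Prop :=
  (∀ i, Measurable (X i)) ∧ (∀ i, P.map (X i) = μ) ∧
    iIndepFun (m := fun _ : ℕ => ‹MeasurableSpace E›) X P

/-- `X` and `Y` are jointly i.i.d. sequences with common law `μ` under `P`. -/
def IsIIDPair {Ωs E : Type*} [MeasurableSpace Ωs] [MeasurableSpace E]
    (P : Measure Ωs) (X Y : ℕ → Ωs → E) (μ : Measure E) : Prop :=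
  (∀ i, Measurable (X i)) ∧ (∀ i, Measurable (Y i)) ∧
  (∀ i, P.map (X i) = μ) ∧ (∀ i, P.map (Y i) = μ) ∧
    iIndepFun (m := fun _ : ℕ ⊕ ℕ => ‹MeasurableSpace E›) (Sum.elim X Y) P

/-- `ρ` is a Hölder continuous probability density on `Ω`, uniformly strictly positive
and bounded from above. -/
def IsGoodDensity {d : ℕ} (Ω : Set (EuclideanSpace ℝ (Fin d)))
    (ρ : EuclideanSpace ℝ (Fin d) → ℝ) : Prop :=
  Measurable ρ ∧
  (∃ α ∈ Set.Ioc (0:ℝ) 1, ∃ C : ℝ, ∀ x ∈ Ω, ∀ y ∈ Ω, |ρ x - ρ y| ≤ C * dist x y ^ α) ∧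
  (∃ a > (0:ℝ), ∀ x ∈ Ω, a ≤ ρ x) ∧ (∃ b : ℝ, ∀ x ∈ Ω, ρ x ≤ b) ∧
  ∫ x in Ω, ρ x = 1

end

/-!
Fix a plan `π` admissible for `Ω` and one piece `s = Ωs k`. Keep the pairs of `π` with both
ends in `s`, drop those with no end in `s`, and send the end outside `s` of every other pair
to a boundary point of `s` almost nearest to the end inside `s` (chosen measurably from a
countable dense subset of `∂s`). This plan is admissible for `s`, and up to a factor
arbitrarily close to `1` it costs `∫ c_s dπ`, where `c_s (x, y) = localizedCost p s (x, y)`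
is `|x - y|^p`, `d(x, sᶜ)^p` or `d(y, sᶜ)^p` according as both ends, only `x` or only `y`
lie in `s`.
By disjointness, at most two pieces see a given pair, and if `x ∈ Ωs k`, `y ∈ Ωs j` with
`k ≠ j`, the segment `[x, y]` leaves `Ωs k` before it reaches `Ωs j`, so
`d(x, (Ωs k)ᶜ) + d(y, (Ωs j)ᶜ) ≤ |x - y|`; with `a^p + b^p ≤ (a + b)^p` this gives
`∑ k, c_{Ωs k} ≤ |x - y|^p` pointwise, and integrating against `π` proves the claim.
-/

open Function Metric Set

lemma ENNReal.le_of_forall_one_lt_le_mul {a b : ℝ≥0∞} (h : ∀ t, 1 < t → a ≤ b * t) :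
    a ≤ b := by
  refine ENNReal.le_of_forall_lt_one_mul_le fun c hc => ?_
  rcases eq_or_ne c 0 with rfl | hc0
  · simp
  rw [mul_comm, ← ENNReal.le_div_iff_mul_le (Or.inl hc0) (Or.inl hc.ne_top), div_eq_mul_inv]
  exact h _ (ENNReal.one_lt_inv.2 hc)

section Geometry

variable {E : Type*} [NormedAddCommGroup E] [NormedSpace ℝ E] {s t : Set E} {x y : E}

lemma exists_mem_frontier_edist_add_edist (hx : x ∈ s) (hy : y ∉ s) :
    ∃ w ∈ frontier s, edist x w + edist w y = edist x y := by
  obtain ⟨w, hw, hws⟩ := isPreconnected_closed_iff.1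
    (convex_segment (𝕜 := ℝ) x y).isPreconnected (closure s) (closure sᶜ)
    isClosed_closure isClosed_closure
    (fun z _ => (em (z ∈ s)).imp (fun h => subset_closure h) fun h => subset_closure h)
    ⟨x, left_mem_segment ℝ x y, subset_closure hx⟩
    ⟨y, right_mem_segment ℝ x y, subset_closure hy⟩
  refine ⟨w, frontier_eq_closure_inter_closure (s := s) ▸ hws, ?_⟩
  rw [edist_dist, edist_dist, edist_dist, ← ENNReal.ofReal_add dist_nonneg dist_nonneg,
    dist_add_dist_of_mem_segment hw]

lemma infEDist_frontier_le_infEDist_compl (hx : x ∈ s) :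
    infEDist x (frontier s) ≤ infEDist x sᶜ :=
  le_infEDist.2 fun y hy => by
    obtain ⟨w, hw, hxy⟩ := exists_mem_frontier_edist_add_edist hx hy
    exact (infEDist_le_edist_of_mem hw).trans (hxy ▸ le_self_add)

lemma infEDist_compl_add_infEDist_compl_le_edist (hs : IsOpen s) (ht : IsOpen t)
    (hst : Disjoint s t) (hx : x ∈ s) (hy : y ∈ t) :
    infEDist x sᶜ + infEDist y tᶜ ≤ edist x y := by
  obtain ⟨w, hw, hxy⟩ := exists_mem_frontier_edist_add_edist hx (hst.notMem_of_mem_right hy)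
  have hws : w ∉ s := (hs.frontier_eq ▸ hw).2
  have hwt : w ∉ t := disjoint_left.1 (hst.closure_left ht) (frontier_subset_closure hw)
  calc infEDist x sᶜ + infEDist y tᶜ ≤ edist x w + edist w y := by
        rw [edist_comm w y]
        exact add_le_add (infEDist_le_edist_of_mem hws) (infEDist_le_edist_of_mem hwt)
    _ = edist x y := hxy

end Geometry

section Selection

variable {E : Type*} [NormedAddCommGroup E] [NormedSpace ℝ E] [MeasurableSpace E]
  [OpensMeasurableSpace E] [SecondCountableTopology E] {s : Set E}

lemma exists_measurable_mem_frontier_edist_lt (hs : MeasurableSet s) {φ : E → ℝ≥0∞}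
    (hφ : Measurable φ) (hφs : ∀ x ∈ s, infEDist x sᶜ < φ x) :
    ∃ g : E → E, Measurable g ∧ ∀ x ∈ s, g x ∈ frontier s ∧ edist x (g x) < φ x := by
  classical
  rcases (frontier s).eq_empty_or_nonempty with hfr | hfr
  · refine ⟨id, measurable_id, fun x hx => ?_⟩
    obtain ⟨y, hy, -⟩ := infEDist_lt_iff.1 (hφs x hx)
    obtain ⟨w, hw, -⟩ := exists_mem_frontier_edist_add_edist hx hy
    exact absurd hfr (nonempty_iff_ne_empty.1 ⟨w, hw⟩)
  obtain ⟨u, hu, hu_count, hu_dense⟩ :=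
    (TopologicalSpace.IsSeparable.of_separableSpace (frontier s)).exists_countable_dense_subset
  obtain ⟨f, rfl⟩ := hu_count.exists_eq_range
    (closure_nonempty_iff.1 ⟨_, hu_dense hfr.some_mem⟩)
  have hex : ∀ x, ∃ n, x ∈ s → edist x (f n) < φ x := by
    intro x
    by_cases hx : x ∈ s
    · have hlt : infEDist x (range f) < φ x := calc
        infEDist x (range f) = infEDist x (closure (range f)) := infEDist_closure.symm
        _ ≤ infEDist x (frontier s) := infEDist_anti hu_dense
        _ ≤ infEDist x sᶜ := infEDist_frontier_le_infEDist_compl hx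
        _ < φ x := hφs x hx
      obtain ⟨_, ⟨n, rfl⟩, hn⟩ := infEDist_lt_iff.1 hlt
      exact ⟨n, fun _ => hn⟩
    · exact ⟨0, fun h => absurd h hx⟩
  refine ⟨fun x => f (Nat.find (hex x)),
    measurable_from_nat.comp (measurable_find hex fun n => hs.imp ?_),
    fun x hx => ⟨hu (mem_range_self _), Nat.find_spec (hex x) hx⟩⟩
  exact measurableSet_lt (continuous_id.edist continuous_const).measurable hφ

lemma IsOpen.exists_measurable_mem_frontier_edist_le (hs : IsOpen s) {t : ℝ≥0∞} (ht : 1 < t) :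
    ∃ g : E → E, Measurable g ∧ ∀ x ∈ s, sᶜ.Nonempty →
      g x ∈ frontier s ∧ edist x (g x) ≤ t * infEDist x sᶜ := by
  rcases sᶜ.eq_empty_or_nonempty with hc | ⟨y, hy⟩
  · exact ⟨id, measurable_id, fun x _ hne => absurd hc hne.ne_empty⟩
  have hlt : ∀ x ∈ s, infEDist x sᶜ < t * infEDist x sᶜ := fun x hx => by
    have h0 : infEDist x sᶜ ≠ 0 := (infEDist_pos_iff_notMem_closure.2
      (hs.isClosed_compl.closure_eq.symm ▸ not_not.2 hx)).ne'
    have htop : infEDist x sᶜ ≠ ∞ :=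
      ne_top_of_le_ne_top (edist_ne_top x y) (infEDist_le_edist_of_mem hy)
    simpa using ENNReal.mul_lt_mul_left h0 htop ht
  obtain ⟨g, hg, hgs⟩ := exists_measurable_mem_frontier_edist_lt hs.measurableSet
    (continuous_infEDist.measurable.const_mul t) hlt
  exact ⟨g, hg, fun x hx _ => ⟨(hgs x hx).1, (hgs x hx).2.le⟩⟩

end Selection

section LocalizedCost

variable {E : Type*} [PseudoEMetricSpace E] {p : ℝ}

open scoped Classical in
noncomputable def localizedCost (p : ℝ) (s : Set E) (z : E × E) : ℝ≥0∞ :=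
  if z.1 ∈ s then if z.2 ∈ s then edist z.1 z.2 ^ p else infEDist z.1 sᶜ ^ p
  else if z.2 ∈ s then infEDist z.2 sᶜ ^ p else 0

lemma measurable_localizedCost [MeasurableSpace E] [OpensMeasurableSpace E]
    [SecondCountableTopology E] {s : Set E} (hs : MeasurableSet s) :
    Measurable (localizedCost (E := E) p s) := by
  have hc : ∀ {f : E × E → ℝ≥0∞}, Continuous f → Measurable fun z => f z ^ p :=
    fun hf => (ENNReal.continuous_rpow_const.comp hf).measurable
  unfold localizedCost
  exact Measurable.ite (measurable_fst hs)
    (Measurable.ite (measurable_snd hs) (hc continuous_edist)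
      (hc (continuous_infEDist.comp continuous_fst)))
    (Measurable.ite (measurable_snd hs) (hc (continuous_infEDist.comp continuous_snd))
      measurable_const)

lemma mem_or_mem_of_localizedCost_ne_zero {s : Set E} {z : E × E}
    (h : localizedCost p s z ≠ 0) : z.1 ∈ s ∨ z.2 ∈ s := by
  by_contra! hz
  simp [localizedCost, hz.1, hz.2] at h

lemma localizedCost_le (hp : 0 ≤ p) (s : Set E) (z : E × E) :
    localizedCost p s z ≤ edist z.1 z.2 ^ p := by
  unfold localizedCost
  split_ifs with h₁ h₂ h₂
  · exact le_rfl
  · exact ENNReal.rpow_le_rpow (infEDist_le_edist_of_mem h₂) hp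
  · exact ENNReal.rpow_le_rpow (edist_comm z.1 z.2 ▸ infEDist_le_edist_of_mem h₁) hp
  · exact bot_le

end LocalizedCost

lemma tsum_localizedCost_le {E : Type*} [NormedAddCommGroup E] [NormedSpace ℝ E] {p : ℝ}
    (hp : 1 ≤ p) {s : ℕ → Set E} (hs : ∀ k, IsOpen (s k)) (hd : Pairwise (Disjoint on s))
    (z : E × E) :
    ∑' k, localizedCost p (s k) z ≤ edist z.1 z.2 ^ p := by
  obtain ⟨x, y⟩ := z
  by_cases hcross : ∃ k j, k ≠ j ∧ x ∈ s k ∧ y ∈ s j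
  · obtain ⟨k, j, hkj, hx, hy⟩ := hcross
    have hxj : x ∉ s j := (hd hkj).notMem_of_mem_left hx
    have hyk : y ∉ s k := (hd hkj).notMem_of_mem_right hy
    rw [tsum_eq_sum (s := {k, j}) fun i hi => ?_, Finset.sum_pair hkj]
    · simp only [localizedCost, hx, hy, hxj, hyk, if_true, if_false]
      calc infEDist x (s k)ᶜ ^ p + infEDist y (s j)ᶜ ^ p
          ≤ (infEDist x (s k)ᶜ + infEDist y (s j)ᶜ) ^ p :=
            ENNReal.add_rpow_le_rpow_add _ _ hp
        _ ≤ edist x y ^ p := ENNReal.rpow_le_rpow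
            (infEDist_compl_add_infEDist_compl_le_edist (hs k) (hs j) (hd hkj) hx hy)
            (by linarith)
    · simp only [Finset.mem_insert, Finset.mem_singleton, not_or] at hi
      have hxi : x ∉ s i := (hd (Ne.symm hi.1)).notMem_of_mem_left hx
      have hyi : y ∉ s i := (hd (Ne.symm hi.2)).notMem_of_mem_left hy
      simp [localizedCost, hxi, hyi]
  · have hsupp : (Function.support fun k => localizedCost p (s k) (x, y)).Subsingleton := by
      intro k hk j hj
      by_contra hkj
      rcases mem_or_mem_of_localizedCost_ne_zero hk with hk | hk <;>
        rcases mem_or_mem_of_localizedCost_ne_zero hj with hj | hj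
      · exact (hd hkj).notMem_of_mem_left hk hj
      · exact hcross ⟨k, j, hkj, hk, hj⟩
      · exact hcross ⟨j, k, Ne.symm hkj, hj, hk⟩
      · exact (hd hkj).notMem_of_mem_left hk hj
    rcases hsupp.eq_empty_or_singleton with h | ⟨k, hk⟩
    · have h0 : (fun k => localizedCost p (s k) (x, y)) = fun _ => 0 :=
        Function.support_eq_empty_iff.1 h
      rw [h0, tsum_zero]
      exact bot_le
    · rw [tsum_eq_single k fun i hi =>
        Function.notMem_support.1 fun hi' => hi ((Set.ext_iff.1 hk i).1 hi')]
      exact localizedCost_le (by linarith) _ _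

section BoundaryPlan

variable {E : Type*} {s : Set E} {g : E → E}

open scoped Classical in
noncomputable def boundaryReroute (s : Set E) (g : E → E) (z : E × E) : E × E :=
  (if z.1 ∈ s then z.1 else g z.2, if z.2 ∈ s then z.2 else g z.1)

lemma edist_boundaryReroute_rpow_le [PseudoEMetricSpace E] {p : ℝ} (hp : 0 < p) {t : ℝ≥0∞}
    (ht : 1 ≤ t) (hg : ∀ x ∈ s, sᶜ.Nonempty → edist x (g x) ≤ t * infEDist x sᶜ)
    {z : E × E} (hz : z.1 ∈ s ∨ z.2 ∈ s) :
    edist (boundaryReroute s g z).1 (boundaryReroute s g z).2 ^ p ≤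
      t ^ p * localizedCost p s z := by
  obtain ⟨x, y⟩ := z
  have hpow : ∀ {a b : ℝ≥0∞}, a ≤ t * b → a ^ p ≤ t ^ p * b ^ p := fun h =>
    (ENNReal.rpow_le_rpow h hp.le).trans_eq (ENNReal.mul_rpow_of_nonneg _ _ hp.le)
  simp only [boundaryReroute, localizedCost]
  by_cases hx : x ∈ s <;> by_cases hy : y ∈ s <;> simp only [hx, hy, if_true, if_false]
  · exact le_mul_of_one_le_left' (ENNReal.one_le_rpow ht hp)
  · exact hpow (hg x hx ⟨y, hy⟩)
  · exact edist_comm y (g y) ▸ hpow (hg y hy ⟨x, hx⟩)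
  · exact absurd hz (by simp [hx, hy])

variable [MeasurableSpace E]

noncomputable def boundaryPlan (s : Set E) (g : E → E) (π : Measure (E × E)) :
    Measure (E × E) :=
  (π.restrict (Prod.fst ⁻¹' s ∪ Prod.snd ⁻¹' s)).map (boundaryReroute s g)

lemma measurable_boundaryReroute (hs : MeasurableSet s) (hg : Measurable g) :
    Measurable (boundaryReroute s g) := by
  unfold boundaryReroute
  exact (Measurable.ite (measurable_fst hs) measurable_fst (hg.comp measurable_snd)).prodMk
    (Measurable.ite (measurable_snd hs) measurable_snd (hg.comp measurable_fst))

lemma boundaryPlan_map_swap (hs : MeasurableSet s) (hg : Measurable g) (π : Measure (E × E)) :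
    boundaryPlan s g (π.map Prod.swap) = (boundaryPlan s g π).map Prod.swap := by
  have hD : MeasurableSet (Prod.fst ⁻¹' s ∪ Prod.snd ⁻¹' s : Set (E × E)) :=
    (measurable_fst hs).union (measurable_snd hs)
  have hswap : Prod.swap ⁻¹' (Prod.fst ⁻¹' s ∪ Prod.snd ⁻¹' s) =
      (Prod.fst ⁻¹' s ∪ Prod.snd ⁻¹' s : Set (E × E)) := by
    ext; simp [or_comm]
  rw [boundaryPlan, boundaryPlan, Measure.restrict_map measurable_swap hD, hswap,
    Measure.map_map (measurable_boundaryReroute hs hg) measurable_swap,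
    Measure.map_map measurable_swap (measurable_boundaryReroute hs hg)]
  rfl

lemma boundaryPlan_compl_closure_prod [TopologicalSpace E] [OpensMeasurableSpace E]
    (hs : MeasurableSet s) (hgm : Measurable g)
    (hg : ∀ x ∈ s, sᶜ.Nonempty → g x ∈ frontier s) (π : Measure (E × E)) :
    boundaryPlan s g π (closure s ×ˢ closure s)ᶜ = 0 := by
  have hR := measurable_boundaryReroute hs hgm
  have hC : MeasurableSet (closure s ×ˢ closure s)ᶜ :=
    (isClosed_closure.measurableSet.prod isClosed_closure.measurableSet).compl
  rw [boundaryPlan, Measure.map_apply hR hC, Measure.restrict_apply (hR hC)]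
  convert measure_empty (μ := π)
  classical
  have hmem : ∀ {x y}, x ∈ s ∨ y ∈ s → (if x ∈ s then x else g y) ∈ closure s := by
    intro x y hxy
    split_ifs with hx
    · exact subset_closure hx
    · exact frontier_subset_closure (hg y (hxy.resolve_left hx) ⟨x, hx⟩)
  exact eq_empty_iff_forall_notMem.2 fun z ⟨hzC, hz⟩ => hzC ⟨hmem hz, hmem hz.symm⟩

lemma map_fst_boundaryPlan_restrict [TopologicalSpace E] [OpensMeasurableSpace E]
    (hs : IsOpen s) (hgm : Measurable g) (hg : ∀ x ∈ s, sᶜ.Nonempty → g x ∈ frontier s)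
    (π : Measure (E × E)) :
    ((boundaryPlan s g π).map Prod.fst).restrict s = (π.map Prod.fst).restrict s := by
  have hR := measurable_boundaryReroute hs.measurableSet hgm
  ext A hA
  have hAs := hA.inter hs.measurableSet
  rw [Measure.restrict_apply hA, Measure.restrict_apply hA, boundaryPlan,
    Measure.map_map measurable_fst hR, Measure.map_apply (measurable_fst.comp hR) hAs,
    Measure.map_apply measurable_fst hAs,
    Measure.restrict_apply ((measurable_fst.comp hR) hAs)]
  congr 1
  ext ⟨x, y⟩
  simp only [boundaryReroute, mem_inter_iff, mem_preimage, comp_apply, mem_union]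
  by_cases hx : x ∈ s
  · simp [hx]
  · simp only [hx, ↓reduceIte, false_or, and_false, iff_false, not_and, and_imp]
    exact fun _ hgy hy => (hs.frontier_eq ▸ hg y hy ⟨x, hx⟩).2 hgy

lemma map_snd_boundaryPlan_restrict [TopologicalSpace E] [OpensMeasurableSpace E]
    (hs : IsOpen s) (hgm : Measurable g) (hg : ∀ x ∈ s, sᶜ.Nonempty → g x ∈ frontier s)
    (π : Measure (E × E)) :
    ((boundaryPlan s g π).map Prod.snd).restrict s = (π.map Prod.snd).restrict s := by
  have hswap : ∀ ρ : Measure (E × E), ρ.map Prod.snd = (ρ.map Prod.swap).map Prod.fst :=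
    fun ρ => by rw [Measure.map_map measurable_fst measurable_swap]; rfl
  rw [hswap, hswap π, ← boundaryPlan_map_swap hs.measurableSet hgm,
    map_fst_boundaryPlan_restrict hs hgm hg]

lemma lintegral_boundaryPlan_le [PseudoEMetricSpace E] [OpensMeasurableSpace E]
    [SecondCountableTopology E] {p : ℝ} (hp : 0 < p) (hs : MeasurableSet s)
    (hgm : Measurable g) {t : ℝ≥0∞} (ht : 1 ≤ t)
    (hg : ∀ x ∈ s, sᶜ.Nonempty → edist x (g x) ≤ t * infEDist x sᶜ) (π : Measure (E × E)) :
    ∫⁻ z, edist z.1 z.2 ^ p ∂boundaryPlan s g π ≤ t ^ p * ∫⁻ z, localizedCost p s z ∂π := by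
  have hD : MeasurableSet (Prod.fst ⁻¹' s ∪ Prod.snd ⁻¹' s : Set (E × E)) :=
    (measurable_fst hs).union (measurable_snd hs)
  have hc : Measurable fun z : E × E => edist z.1 z.2 ^ p := by fun_prop
  rw [boundaryPlan, lintegral_map hc (measurable_boundaryReroute hs hgm),
    ← lintegral_const_mul _ (measurable_localizedCost hs)]
  exact (setLIntegral_mono' hD fun z hz => edist_boundaryReroute_rpow_le hp ht hg hz).trans
    (setLIntegral_le_lintegral _ _)

end BoundaryPlan

lemma bCost_le_lintegral_localizedCost {E : Type*} [NormedAddCommGroup E] [NormedSpace ℝ E]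
    [MeasurableSpace E] [OpensMeasurableSpace E] [SecondCountableTopology E] {p : ℝ} (hp : 0 < p)
    {s : Set E} (hs : IsOpen s) {μ ν : Measure E} {π : Measure (E × E)}
    (hfst : (π.map Prod.fst).restrict s = μ.restrict s)
    (hsnd : (π.map Prod.snd).restrict s = ν.restrict s) :
    bCost p s μ ν ≤ ∫⁻ z, localizedCost p s z ∂π := by
  refine ENNReal.le_of_forall_one_lt_le_mul fun t ht => ?_
  have hr : 1 < t ^ p⁻¹ := ENNReal.one_lt_rpow ht (inv_pos.2 hp)
  obtain ⟨g, hgm, hg⟩ := hs.exists_measurable_mem_frontier_edist_le hr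
  have hfr : ∀ x ∈ s, sᶜ.Nonempty → g x ∈ frontier s := fun x hx hne => (hg x hx hne).1
  calc bCost p s μ ν ≤ ∫⁻ z, edist z.1 z.2 ^ p ∂boundaryPlan s g π :=
        iInf₂_le _ ⟨boundaryPlan_compl_closure_prod hs.measurableSet hgm hfr π,
          (map_fst_boundaryPlan_restrict hs hgm hfr π).trans hfst,
          (map_snd_boundaryPlan_restrict hs hgm hfr π).trans hsnd⟩
    _ ≤ (t ^ p⁻¹) ^ p * ∫⁻ z, localizedCost p s z ∂π :=
        lintegral_boundaryPlan_le hp hs.measurableSet hgm hr.le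
          (fun x hx hne => (hg x hx hne).2) π
    _ = (∫⁻ z, localizedCost p s z ∂π) * t := by
        rw [← ENNReal.rpow_mul, inv_mul_cancel₀ hp.ne', ENNReal.rpow_one, mul_comm]

theorem boundaryCost_superadditive_general
    {d : ℕ} (p : ℝ) (hp : 1 ≤ p)
    (Ω : Set (EuclideanSpace ℝ (Fin d)))
    (Ωs : ℕ → Set (EuclideanSpace ℝ (Fin d)))
    (hopen : ∀ k, IsOpen (Ωs k)) (hsub : ∀ k, Ωs k ⊆ Ω)
    (hdisj : Pairwise (Function.onFun Disjoint Ωs))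
    (μ ν : Measure (EuclideanSpace ℝ (Fin d))) :
    ∑' k, bCost p (Ωs k) μ ν ≤ bCost p Ω μ ν := by
  refine le_iInf₂ fun π ⟨_, hfst, hsnd⟩ => ?_
  have hrestrict : ∀ {ρ ρ' : Measure (EuclideanSpace ℝ (Fin d))} (k : ℕ),
      ρ.restrict Ω = ρ'.restrict Ω → ρ.restrict (Ωs k) = ρ'.restrict (Ωs k) := fun k h => by
    rw [← Measure.restrict_restrict_of_subset (hsub k), h,
      Measure.restrict_restrict_of_subset (hsub k)]
  calc ∑' k, bCost p (Ωs k) μ ν ≤ ∑' k, ∫⁻ z, localizedCost p (Ωs k) z ∂π :=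
        ENNReal.tsum_le_tsum fun k => bCost_le_lintegral_localizedCost (by linarith) (hopen k)
          (hrestrict k hfst) (hrestrict k hsnd)
    _ = ∫⁻ z, ∑' k, localizedCost p (Ωs k) z ∂π := (lintegral_tsum fun k =>
        (measurable_localizedCost (hopen k).measurableSet).aemeasurable).symm
    _ ≤ ∫⁻ z, edist z.1 z.2 ^ p ∂π := lintegral_mono (tsum_localizedCost_le hp hopen hdisj)

/-- Superadditivity of the boundary Wasserstein cost over a countable disjoint family of
open subsets of a bounded open set `Ω`. -/
theorem boundaryCost_superadditive
    {d : ℕ} (p : ℝ) (hp : 1 ≤ p)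
    (Ω : Set (EuclideanSpace ℝ (Fin d))) (hΩopen : IsOpen Ω)
    (hΩbdd : Bornology.IsBounded Ω)
    (Ωs : ℕ → Set (EuclideanSpace ℝ (Fin d)))
    (hopen : ∀ k, IsOpen (Ωs k)) (hsub : ∀ k, Ωs k ⊆ Ω)
    (hdisj : Pairwise (Function.onFun Disjoint Ωs))
    (μ ν : Measure (EuclideanSpace ℝ (Fin d)))
    (hμ : IsFiniteMeasure μ) (hν : IsFiniteMeasure ν) :
    ∑' k, bCost p (Ωs k) μ ν ≤ bCost p Ω μ ν :=
  boundaryCost_superadditive_general p hp Ω Ωs hopen hsub hdisj μ ν
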